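/- Let z : ℤ, let p : ℤ be prime, and let a b : ℤ with a^2 + z*a*b + b^2 = p. Then in R_z := AdjoinRoot (X^2 - C z * X + 1 : ℤ[X]), the elements a + b•ω and (a + z*b) - b•ω are associated (Associated (a + b•ω) ((a + z*b) - b•ω)) if and only if p ∣ 2 - z or p ∣ 2 + z. -/

import Mathlib

open Polynomial

noncomputable abbrev Rz (z : ℤ) : Type :=
  AdjoinRoot (X ^ 2 - C z * X + 1 : ℤ[X])

noncomputable abbrev omegaZ (z : ℤ) : Rz z :=
  AdjoinRoot.root (X ^ 2 - C z * X + 1 : ℤ[X])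

/-! Write α = a + bω and ᾱ = (a + zb) - bω, so that αᾱ = p. If α and ᾱ are associated, then
p ∣ α² = (a² - b²) + b(2a + zb)ω, and since 1, ω is a ℤ-basis of R_z, p ∣ a² - b². Conversely, if
p ∣ a² - b², then also p ∣ b(2a + zb), so ᾱ²/p has integral coordinates; it is a unit (with
inverse α²/p) carrying α to ᾱ. Finally p divides neither a nor b, and (a ± b)² = p ± (2 ∓ z)ab,
so p ∣ a ± b exactly when p ∣ 2 ∓ z. -/

theorem Prime.dvd_iff_dvd_of_sq_eq_add {R : Type*} [CommRing R] {p s t u v : R} (hp : Prime p)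
    (hu : ¬p ∣ u) (hv : ¬p ∣ v) (h : s ^ 2 = p + t * (u * v)) : p ∣ s ↔ p ∣ t := by
  rw [← hp.dvd_pow_iff_dvd two_ne_zero, h, dvd_add_right dvd_rfl, hp.dvd_mul, hp.dvd_mul]
  tauto

theorem IsAdjoinRootMonic.dvd_of_algebraMap_dvd_add_smul_root {R S : Type*} [CommRing R]
    [CommRing S] [Algebra R S] {f : R[X]} (h : IsAdjoinRootMonic S f) (hf : 1 < f.natDegree)
    {r c d : R} (hdvd : algebraMap R S r ∣ algebraMap R S c + d • h.root) : r ∣ c ∧ r ∣ d := by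
  obtain ⟨w, hw⟩ := hdvd
  rw [Algebra.algebraMap_eq_smul_one c, ← pow_zero h.root, ← Algebra.smul_def] at hw
  have hcoeff := congrArg h.coeff hw
  rw [map_add, map_smul, map_smul, h.coeff_root_pow (by omega), ← pow_one h.root,
    h.coeff_root_pow hf, map_smul] at hcoeff
  exact ⟨⟨h.coeff w 0, by simpa using congrFun hcoeff 0⟩,
    ⟨h.coeff w 1, by simpa using congrFun hcoeff 1⟩⟩

namespace Rz

variable {z p a b : ℤ}

theorem prime_not_dvd_left (hp : Prime p) (hab : a ^ 2 + z * a * b + b ^ 2 = p) : ¬p ∣ a := by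
  intro ha
  have hb : p ∣ b := hp.dvd_of_dvd_pow (n := 2) <| by
    rw [show b ^ 2 = p - a * (a + z * b) by linear_combination hab]
    exact dvd_sub dvd_rfl (ha.mul_right _)
  have hsq : p * p ∣ a ^ 2 + z * a * b + b ^ 2 := by
    rw [sq, sq]
    exact dvd_add (dvd_add (mul_dvd_mul ha ha) (mul_dvd_mul (ha.mul_left z) hb)) (mul_dvd_mul hb hb)
  rw [hab] at hsq
  exact hp.not_dvd_one ((mul_dvd_mul_iff_left hp.ne_zero).mp (by rwa [mul_one]))

theorem prime_not_dvd_right (hp : Prime p) (hab : a ^ 2 + z * a * b + b ^ 2 = p) : ¬p ∣ b :=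
  prime_not_dvd_left (z := z) (a := b) (b := a) hp (by linear_combination hab)

theorem prime_dvd_sq_sub_sq_iff (hp : Prime p) (hab : a ^ 2 + z * a * b + b ^ 2 = p) :
    p ∣ a ^ 2 - b ^ 2 ↔ p ∣ 2 - z ∨ p ∣ 2 + z := by
  have hu := prime_not_dvd_left hp hab
  have hv := prime_not_dvd_right hp hab
  rw [sq_sub_sq, hp.dvd_mul, ← dvd_neg (b := 2 + z)]
  exact or_congr (hp.dvd_iff_dvd_of_sq_eq_add hu hv (by linear_combination hab))
    (hp.dvd_iff_dvd_of_sq_eq_add hu hv (by linear_combination hab))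

theorem prime_dvd_mul_of_dvd_sq_sub_sq (hp : Prime p) (hab : a ^ 2 + z * a * b + b ^ 2 = p)
    (h : p ∣ a ^ 2 - b ^ 2) : p ∣ b * (2 * a + z * b) := by
  refine (hp.dvd_or_dvd ?_).resolve_left (prime_not_dvd_left hp hab)
  rw [show a * (b * (2 * a + z * b)) = b * (a ^ 2 - b ^ 2) + b * p by linear_combination b * hab]
  exact dvd_add (h.mul_left b) (dvd_mul_left p b)

theorem omegaZ_sq : omegaZ z ^ 2 = z * omegaZ z - 1 := by
  have h : AdjoinRoot.mk _ (X ^ 2 - C z * X + 1 : ℤ[X]) = 0 := AdjoinRoot.mk_self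
  simp only [map_add, map_sub, map_mul, map_pow, map_one, map_intCast,
    AdjoinRoot.mk_X, eq_intCast] at h
  linear_combination h

theorem mul_conj_eq (hab : a ^ 2 + z * a * b + b ^ 2 = p) :
    ((a : Rz z) + b • omegaZ z) * (((a + z * b : ℤ) : Rz z) - b • omegaZ z) = p := by
  have habR := congrArg (Int.cast : ℤ → Rz z) hab
  push_cast at habR
  simp only [zsmul_eq_mul]
  push_cast
  linear_combination (-(b : Rz z) ^ 2) * omegaZ_sq + habR

theorem add_zsmul_omegaZ_sq :
    ((a : Rz z) + b • omegaZ z) ^ 2 =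
      ((a ^ 2 - b ^ 2 : ℤ) : Rz z) + (b * (2 * a + z * b)) • omegaZ z := by
  simp only [zsmul_eq_mul]
  push_cast
  linear_combination (b : Rz z) ^ 2 * omegaZ_sq

theorem intCast_dvd_add_zsmul_omegaZ {r c d : ℤ} (h : (r : Rz z) ∣ c + d • omegaZ z) :
    r ∣ c ∧ r ∣ d := by
  have hmonic : (X ^ 2 - C z * X + 1 : ℤ[X]).Monic := by monicity!
  have hdeg : (X ^ 2 - C z * X + 1 : ℤ[X]).natDegree = 2 := by compute_degree!
  apply (AdjoinRoot.isAdjoinRootMonic _ hmonic).dvd_of_algebraMap_dvd_add_smul_root (by omega)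
  simpa only [eq_intCast, AdjoinRoot.isAdjoinRootMonic_toAdjoinRoot,
    AdjoinRoot.isAdjoinRoot_root_eq_root] using h

theorem associated_conj_of_dvd (hp : p ≠ 0) (hab : a ^ 2 + z * a * b + b ^ 2 = p) {c d : ℤ}
    (hc : a ^ 2 - b ^ 2 = p * c) (hd : b * (2 * a + z * b) = p * d) :
    Associated ((a : Rz z) + b • omegaZ z) (((a + z * b : ℤ) : Rz z) - b • omegaZ z) := by
  have hnorm : c ^ 2 + z * c * d + d ^ 2 = 1 := mul_left_cancel₀ (pow_ne_zero 2 hp) <| by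
    linear_combination (-(a ^ 2 - b ^ 2 + p * c) - z * p * d) * hc
      + (-(z * (a ^ 2 - b ^ 2)) - (b * (2 * a + z * b) + p * d)) * hd
      + (a ^ 2 + z * a * b + b ^ 2 + p) * hab
  have hre : a * c + z * a * d + b * d = a + z * b := mul_left_cancel₀ hp <| by
    linear_combination (-a) * hc + (-(z * a) - b) * hd + (a + z * b) * hab
  have him : b * c - a * d = -b := mul_left_cancel₀ hp <| by
    linear_combination (-b) * hc + a * hd + (-b) * hab
  have hnormR := congrArg (Int.cast : ℤ → Rz z) hnorm
  have hreR := congrArg (Int.cast : ℤ → Rz z) hre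
  have himR := congrArg (Int.cast : ℤ → Rz z) him
  push_cast at hnormR hreR himR
  -- the unit ᾱ²/p = c + d(z - ω) and its inverse α²/p
  refine ⟨⟨((c + z * d : ℤ) : Rz z) - d • omegaZ z, (c : Rz z) + d • omegaZ z, ?_, ?_⟩, ?_⟩ <;>
    simp only [zsmul_eq_mul] <;> push_cast
  · linear_combination (-(d : Rz z) ^ 2) * omegaZ_sq + hnormR
  · linear_combination (-(d : Rz z) ^ 2) * omegaZ_sq + hnormR
  · linear_combination (-((b : Rz z) * (d : Rz z))) * omegaZ_sq + hreR + omegaZ z * himR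

theorem associated_conj_iff_dvd_sq_sub_sq (hp : Prime p) (hab : a ^ 2 + z * a * b + b ^ 2 = p) :
    Associated ((a : Rz z) + b • omegaZ z) (((a + z * b : ℤ) : Rz z) - b • omegaZ z) ↔
      p ∣ a ^ 2 - b ^ 2 := by
  constructor
  · intro h
    have hsq : (p : Rz z) ∣ ((a : Rz z) + b • omegaZ z) ^ 2 :=
      mul_conj_eq hab ▸ sq ((a : Rz z) + b • omegaZ z) ▸ mul_dvd_mul_left _ h.symm.dvd
    rw [add_zsmul_omegaZ_sq] at hsq
    exact (intCast_dvd_add_zsmul_omegaZ hsq).1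
  · intro h
    obtain ⟨c, hc⟩ := h
    obtain ⟨d, hd⟩ := prime_dvd_mul_of_dvd_sq_sub_sq hp hab ⟨c, hc⟩
    exact associated_conj_of_dvd hp.ne_zero hab hc hd

end Rz

theorem stmt13 (z p : ℤ) (hp : Prime p) (a b : ℤ)
    (hab : a ^ 2 + z * a * b + b ^ 2 = p) :
    Associated ((a : Rz z) + b • omegaZ z) (((a + z * b : ℤ) : Rz z) - b • omegaZ z) ↔
      (p ∣ 2 - z ∨ p ∣ 2 + z) :=
  (Rz.associated_conj_iff_dvd_sq_sub_sq hp hab).trans (Rz.prime_dvd_sq_sub_sq_iff hp hab)
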